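/- arXiv:2108.05714 — 5 statements merged into one kernel-verified Lean document; each statement's English description precedes it below -/
import Mathlib

section
/- The free group F₂ of rank 2 is F₂-paradoxical with respect to the action of F₂ on itself by left multiplication. That is, there exist pairwise disjoint subsets A₁,...,Aₙ, B₁,...,Bₘ of F₂ and group elements g₁,...,gₙ, h₁,...,hₘ ∈ F₂ such that F₂ = ⋃ᵢ gᵢAᵢ and F₂ = ⋃ⱼ hⱼBⱼ. -/
open Pointwise

/-- `A` and `B` are `G`-equidecomposable: each can be partitioned into the same finite
number of pairwise disjoint pieces that are matched up by elements of `G`. -/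
def Equidecomposable (G : Type*) {X : Type*} [Group G] [MulAction G X] (A B : Set X) : Prop :=
  ∃ (n : ℕ) (As Bs : Fin n → Set X) (g : Fin n → G),
    (⋃ i, As i) = A ∧ (⋃ i, Bs i) = B ∧
    Pairwise (Function.onFun Disjoint As) ∧
    Pairwise (Function.onFun Disjoint Bs) ∧
    ∀ i, g i • As i = Bs i

/-- `E` is `G`-paradoxical. -/
def Paradoxical (G : Type*) {X : Type*} [Group G] [MulAction G X] (E : Set X) : Prop :=
  ∃ (n m : ℕ) (As : Fin n → Set X) (Bs : Fin m → Set X) (g : Fin n → G) (h : Fin m → G),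
    (∀ i, As i ⊆ E) ∧ (∀ j, Bs j ⊆ E) ∧
    Pairwise (Function.onFun Disjoint As) ∧
    Pairwise (Function.onFun Disjoint Bs) ∧
    (∀ i j, Disjoint (As i) (Bs j)) ∧
    (⋃ i, g i • As i) = E ∧ (⋃ j, h j • Bs j) = E

/-! Write `W(s)` for the elements of `F₂` whose reduced word starts with the letter `s`. An element
outside `W(a)` is `a` times an element of `W(a⁻¹)`, so `F₂ = W(a) ∪ a • W(a⁻¹)`, and likewise
`F₂ = W(b) ∪ b • W(b⁻¹)`; since the four sets `W(a^{±1}), W(b^{±1})` are pairwise disjoint, they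
form a paradoxical decomposition. -/

theorem paradoxical_of_union_smul_eq {G X : Type*} [Group G] [MulAction G X]
    {E A₁ A₂ B₁ B₂ : Set X} {g h : G} (hA₂ : A₂ ⊆ E) (hB₂ : B₂ ⊆ E)
    (hA : Disjoint A₁ A₂) (hB : Disjoint B₁ B₂) (hAB : Disjoint (A₁ ∪ A₂) (B₁ ∪ B₂))
    (hEA : A₁ ∪ g • A₂ = E) (hEB : B₁ ∪ h • B₂ = E) : Paradoxical G E := by
  simp only [Set.disjoint_union_left, Set.disjoint_union_right] at hAB
  refine ⟨2, 2, ![A₁, A₂], ![B₁, B₂], ![1, g], ![1, h], ?_, ?_, ?_, ?_, ?_, ?_, ?_⟩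
  · simpa [Fin.forall_fin_two, hA₂] using hEA ▸ Set.subset_union_left
  · simpa [Fin.forall_fin_two, hB₂] using hEB ▸ Set.subset_union_left
  · simp [Pairwise, Fin.forall_fin_two, Function.onFun, hA, hA.symm]
  · simp [Pairwise, Fin.forall_fin_two, Function.onFun, hB, hB.symm]
  · simp [Fin.forall_fin_two, hAB]
  · rw [← hEA]; ext; simp [Fin.exists_fin_two]
  · rw [← hEB]; ext; simp [Fin.exists_fin_two]

namespace FreeGroup

variable {α : Type*} [DecidableEq α]

theorem startsWith_union_smul_startsWith_inv (p : α × Bool) :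
    startsWith p ∪ mk [p] • startsWith (p.1, !p.2) = Set.univ := by
  refine Set.eq_univ_of_forall fun w => or_iff_not_imp_left.2 fun hw => ?_
  have hw' : (mk [p])⁻¹ * w ∈ startsWith (p.1, !p.2) := by
    simpa [inv_mk, invRev] using startsWith_mk_mul (w := (p.1, !p.2)) w (by simpa using hw)
  exact Set.mem_smul_set.2 ⟨_, hw', mul_inv_cancel_left _ _⟩

theorem paradoxical_univ {x y : α} (hxy : x ≠ y) :
    Paradoxical (FreeGroup α) (Set.univ : Set (FreeGroup α)) :=
  paradoxical_of_union_smul_eq (Set.subset_univ _) (Set.subset_univ _) (by simp) (by simp)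
    (by simp [Set.disjoint_union_left, Set.disjoint_union_right, hxy])
    (startsWith_union_smul_startsWith_inv (x, true))
    (startsWith_union_smul_startsWith_inv (y, true))

end FreeGroup

/-- The free group on two generators is paradoxical with respect to its action on
itself by left multiplication. -/
theorem freeGroup_paradoxical :
    Paradoxical (FreeGroup Bool) (Set.univ : Set (FreeGroup Bool)) :=
  FreeGroup.paradoxical_univ Bool.false_ne_true
end

section
/- F₂, the free group on generators a and b, can be partitioned into two disjoint sets P₁ and P₂ such that P₁ is F₂-equidecomposable with F₂ and P₂ is F₂-equidecomposable with F₂. Explicitly, take A₁ = Ψ(a⁻¹) ∪ {aⁿ : n ≥ 0}, A₂ = Ψ(a) \ {aⁿ : n ≥ 0}, B₁ = Ψ(b⁻¹), B₂ = Ψ(b), P₁ = A₁ ∪ A₂, P₂ = B₁ ∪ B₂; then a·A₁ ∪ A₂ = F₂ and b·B₁ ∪ B₂ = F₂. -/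
/-!
Left multiplication by `a` maps `Ψ(a⁻¹)` onto `Ψ(a)ᶜ`: it cancels a leading `a⁻¹` and otherwise
prepends `a`. So `a • Ψ(a⁻¹)` and `Ψ(a)` tile `F₂`, and likewise for `b`. The four sets `Ψ(ρ)`
miss only the identity; to put it into `P₁`, the ray `{aⁿ : n ≥ 0}` is moved from `Ψ(a)` to the
first piece, and the tiling survives because `a` shifts the ray onto `Ψ(a) ∩ {aⁿ : n ≥ 0}`.
-/

open Pointwise

/-- `Psi ρ` is the set of elements of the free group on two generators whose reduced word
begins with the letter `ρ`. -/
def Psi (ρ : Bool × Bool) : Set (FreeGroup Bool) :=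
  {w | w.toWord.head? = some ρ}

theorem Equidecomposable.union_smul_left {G X : Type*} [Group G] [MulAction G X] {A B : Set X}
    (g : G) (h : Disjoint A B) (hg : Disjoint (g • A) B) :
    Equidecomposable G (A ∪ B) (g • A ∪ B) :=
  ⟨2, ![A, B], ![g • A, B], ![g, 1], by simp [Set.ext_iff, Fin.exists_fin_two],
    by simp [Set.ext_iff, Fin.exists_fin_two],
    by simpa [pairwise_fin_succ_iff_of_isSymm, Function.onFun] using h,
    by simpa [pairwise_fin_succ_iff_of_isSymm, Function.onFun] using hg,
    by simp [Fin.forall_fin_two]⟩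

namespace FreeGroup

variable {α : Type*}

def ray (x : α) : Set (FreeGroup α) := {g | ∃ n : ℕ, g = of x ^ n}

theorem of_smul_ray_subset (x : α) : of x • ray x ⊆ ray x := by
  rintro _ ⟨_, ⟨n, rfl⟩, rfl⟩
  exact ⟨n + 1, (pow_succ' _ _).symm⟩

variable [DecidableEq α]

theorem inv_mk_mul_notMem_startsWith {w : α × Bool} {g : FreeGroup α} (hg : g ∈ startsWith w) :
    (mk [w])⁻¹ * g ∉ startsWith (w.1, !w.2) := by
  obtain ⟨t, ht⟩ : ∃ t, g.toWord = w :: t := by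
    rcases h : g.toWord with _ | ⟨v, t⟩ <;> simp_all [startsWith]
  obtain ⟨hhead, ht_red⟩ := List.isChain_cons.mp (ht ▸ isReduced_toWord : IsReduced (w :: t))
  have hg_tail : (mk [w])⁻¹ * g = mk t := by
    rw [inv_mul_eq_iff_eq_mul, mul_mk, List.singleton_append, ← ht, mk_toWord]
  rw [hg_tail, startsWith, Set.mem_ofPred_eq, toWord_mk, IsReduced.reduce_eq ht_red,
    ← List.head?_eq_getElem?]
  intro h
  simpa using hhead _ h rfl

theorem mk_smul_startsWith (w : α × Bool) :
    mk [w] • startsWith (w.1, !w.2) = (startsWith w)ᶜ := by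
  ext g
  rw [Set.mem_smul_set_iff_inv_smul_mem, smul_eq_mul, Set.mem_compl_iff]
  constructor
  · intro h hg
    exact inv_mk_mul_notMem_startsWith hg h
  · intro hg
    rw [inv_mk]
    exact startsWith_mk_mul (w := (w.1, !w.2)) g (by simpa using hg)

theorem of_smul_startsWith (x : α) : of x • startsWith (x, false) = (startsWith (x, true))ᶜ :=
  mk_smul_startsWith (x, true)

section Ray

variable (x : α)

theorem startsWith_inter_ray_subset : startsWith (x, true) ∩ ray x ⊆ of x • ray x := by
  rintro _ ⟨hg, n, rfl⟩
  obtain _ | n := n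
  · exact absurd (pow_zero (of x)) (startsWith.ne_one _ hg)
  · exact ⟨of x ^ n, ⟨n, rfl⟩, (pow_succ' _ _).symm⟩

theorem ray_subset_insert_one_startsWith : ray x ⊆ insert 1 (startsWith (x, true)) := by
  rintro _ ⟨_ | n, rfl⟩
  · exact Set.mem_insert _ _
  · right
    simp [startsWith, toWord_of_pow, List.replicate_succ]

theorem of_smul_union_ray_union_eq_univ :
    of x • (startsWith (x, false) ∪ ray x) ∪ (startsWith (x, true) \ ray x) = Set.univ := by
  rw [Set.smul_set_union, of_smul_startsWith, Set.eq_univ_iff_forall]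
  intro g
  by_cases hg : g ∈ startsWith (x, true)
  · by_cases hr : g ∈ ray x
    · exact .inl (.inr (startsWith_inter_ray_subset x ⟨hg, hr⟩))
    · exact .inr ⟨hg, hr⟩
  · exact .inl (.inl hg)

theorem disjoint_of_smul_union_ray :
    Disjoint (of x • (startsWith (x, false) ∪ ray x)) (startsWith (x, true) \ ray x) := by
  rw [Set.smul_set_union, of_smul_startsWith]
  exact (disjoint_compl_left.mono_right Set.sdiff_subset).union_left
    (Set.disjoint_sdiff_right.mono_left (of_smul_ray_subset x))

theorem disjoint_union_ray :
    Disjoint (startsWith (x, false) ∪ ray x) (startsWith (x, true) \ ray x) :=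
  ((startsWith.disjoint_iff_ne.mpr (by simp)).mono_right Set.sdiff_subset).union_left
    Set.disjoint_sdiff_right

theorem startsWith_union_ray_union_eq :
    startsWith (x, false) ∪ ray x ∪ (startsWith (x, true) \ ray x) =
      insert 1 (startsWith (x, false) ∪ startsWith (x, true)) := by
  have hray :
      ray x ∪ startsWith (x, true) = insert 1 (startsWith (x, true)) :=
    (Set.union_subset (ray_subset_insert_one_startsWith x) (Set.subset_insert _ _)).antisymm
      (Set.insert_subset (.inl ⟨0, (pow_zero _).symm⟩) Set.subset_union_right)
  rw [Set.union_assoc, Set.union_sdiff_self, hray, Set.union_insert]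

end Ray

theorem isCompl_insert_one_startsWith_true :
    IsCompl (insert (1 : FreeGroup Bool) (startsWith (true, false) ∪ startsWith (true, true)))
      (startsWith (false, false) ∪ startsWith (false, true)) := by
  have hcompl : startsWith (false, false) ∪ startsWith (false, true) =
      (insert 1 (startsWith (true, false) ∪ startsWith (true, true)))ᶜ := by
    ext g
    simp only [Set.mem_compl_iff, Set.mem_insert_iff, Set.mem_union, startsWith,
      Set.mem_ofPred_eq, ← toWord_eq_nil_iff]
    rcases g.toWord with _ | ⟨⟨_ | _, _ | _⟩, t⟩ <;> simp
  exact hcompl ▸ isCompl_compl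

end FreeGroup

theorem Psi_eq_startsWith (ρ : Bool × Bool) : Psi ρ = FreeGroup.startsWith ρ := by
  ext g
  simp [Psi, FreeGroup.startsWith, List.head?_eq_getElem?]

/-- The free group `F₂` on generators `a = of true`, `b = of false` is partitioned into
`P₁` and `P₂`, each `F₂`-equidecomposable with `F₂`, using the explicit pieces
`A₁ = Ψ(a⁻¹) ∪ {aⁿ : n ≥ 0}`, `A₂ = Ψ(a) \ {aⁿ : n ≥ 0}`, `B₁ = Ψ(b⁻¹)`, `B₂ = Ψ(b)`. -/
theorem freeGroup_partition_equidecomposable :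
    ∀ A₁ A₂ B₁ B₂ P₁ P₂ : Set (FreeGroup Bool),
    A₁ = Psi (true, false) ∪ {x | ∃ n : ℕ, x = FreeGroup.of true ^ n} →
    A₂ = Psi (true, true) \ {x | ∃ n : ℕ, x = FreeGroup.of true ^ n} →
    B₁ = Psi (false, false) →
    B₂ = Psi (false, true) →
    P₁ = A₁ ∪ A₂ → P₂ = B₁ ∪ B₂ →
    (FreeGroup.of true • A₁) ∪ A₂ = Set.univ ∧
    (FreeGroup.of false • B₁) ∪ B₂ = Set.univ ∧
    Disjoint P₁ P₂ ∧ P₁ ∪ P₂ = Set.univ ∧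
    Equidecomposable (FreeGroup Bool) P₁ (Set.univ : Set (FreeGroup Bool)) ∧
    Equidecomposable (FreeGroup Bool) P₂ (Set.univ : Set (FreeGroup Bool)) := by
  rintro _ _ _ _ _ _ rfl rfl rfl rfl rfl rfl
  simp only [Psi_eq_startsWith]
  rw [show {x | ∃ n : ℕ, x = FreeGroup.of true ^ n} = FreeGroup.ray true from rfl]
  have hA := FreeGroup.of_smul_union_ray_union_eq_univ true
  have hB : FreeGroup.of false • FreeGroup.startsWith (false, false) ∪
      FreeGroup.startsWith (false, true) = Set.univ := by
    rw [FreeGroup.of_smul_startsWith, Set.compl_union_self]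
  have hP := FreeGroup.startsWith_union_ray_union_eq true ▸
    FreeGroup.isCompl_insert_one_startsWith_true
  refine ⟨hA, hB, hP.disjoint, hP.sup_eq_top, ?_, ?_⟩
  · rw [← hA]
    exact .union_smul_left _ (FreeGroup.disjoint_union_ray true)
      (FreeGroup.disjoint_of_smul_union_ray true)
  · rw [← hB]
    refine .union_smul_left _ (FreeGroup.startsWith.disjoint_iff_ne.mpr (by simp)) ?_
    rw [FreeGroup.of_smul_startsWith]
    exact disjoint_compl_left
end

section
/- If A and B are G-equidecomposable subsets of a G-set X, then there is a bijection g : A → B such that for every subset C ⊆ A, C is G-equidecomposable with g(C). -/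
/-!
Glue the maps `x ↦ gᵢ • x` on the pieces `Aᵢ` into a single map `f`. Since both the pieces `Aᵢ`
and their translates `Bᵢ = gᵢ • Aᵢ` are pairwise disjoint, `f` is a bijection `A → B`. For `C ⊆ A`
the pieces `C ∩ Aᵢ` are moved by the same `gᵢ` onto `f '' (C ∩ Aᵢ)`, and these images are pairwise
disjoint because `f` is injective on `A`.
-/

open Pointwise

open Set Function

theorem Set.injOn_iUnion_of_pairwise_disjoint_image {ι α β : Type*} {f : α → β} {s : ι → Set α}
    (hinj : ∀ i, InjOn f (s i)) (hdisj : Pairwise (Disjoint on fun i ↦ f '' s i)) :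
    InjOn f (⋃ i, s i) := by
  intro x hx y hy hxy
  obtain ⟨i, hxi⟩ := mem_iUnion.mp hx
  obtain ⟨j, hyj⟩ := mem_iUnion.mp hy
  obtain rfl : i = j := by
    by_contra hij
    exact (hdisj hij).ne_of_mem (mem_image_of_mem f hxi) (mem_image_of_mem f hyj) hxy
  exact hinj i hxi hyj hxy

section PiecewiseSmul

variable {ι G X : Type*} [Group G] [MulAction G X] {As Bs : ι → Set X} {g : ι → G}

open scoped Classical in
noncomputable def piecewiseSmul (As : ι → Set X) (g : ι → G) (x : X) : X :=
  if hx : ∃ i, x ∈ As i then g hx.choose • x else x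

theorem eqOn_piecewiseSmul (hdA : Pairwise (Disjoint on As)) (i : ι) :
    EqOn (piecewiseSmul As g) (g i • ·) (As i) := by
  intro x hx
  have hex : ∃ j, x ∈ As j := ⟨i, hx⟩
  obtain rfl : hex.choose = i := by
    by_contra hne
    exact (hdA hne).ne_of_mem hex.choose_spec hx rfl
  simp only [piecewiseSmul, dif_pos hex]

theorem bijOn_piecewiseSmul (hdA : Pairwise (Disjoint on As)) (hdB : Pairwise (Disjoint on Bs))
    (hg : ∀ i, g i • As i = Bs i) :
    BijOn (piecewiseSmul As g) (⋃ i, As i) (⋃ i, Bs i) := by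
  have hbij : ∀ i, BijOn (piecewiseSmul As g) (As i) (Bs i) := fun i ↦
    hg i ▸ (eqOn_piecewiseSmul hdA i).bijOn_iff.mpr (MulAction.injective (g i)).injOn.bijOn_image
  refine bijOn_iUnion hbij (injOn_iUnion_of_pairwise_disjoint_image (fun i ↦ (hbij i).injOn) ?_)
  intro i j hij
  simpa only [onFun, (hbij i).image_eq, (hbij j).image_eq] using hdB hij

end PiecewiseSmul

theorem Equidecomposable.image_of_eqOn_smul {G X : Type*} [Group G] [MulAction G X] {n : ℕ}
    {f : X → X} {C : Set X} {As : Fin n → Set X} {g : Fin n → G} (hC : C ⊆ ⋃ i, As i)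
    (hdA : Pairwise (Disjoint on As)) (hf : ∀ i, EqOn f (g i • ·) (As i)) (hinj : InjOn f C) :
    Equidecomposable G C (f '' C) := by
  have hpieces : C = ⋃ i, C ∩ As i := by rw [← inter_iUnion, inter_eq_left.mpr hC]
  refine ⟨n, fun i ↦ C ∩ As i, fun i ↦ f '' (C ∩ As i), g, hpieces.symm, ?_, ?_, ?_, ?_⟩
  · rw [← image_iUnion, ← hpieces]
  · exact fun i j hij ↦ (hdA hij).mono inter_subset_right inter_subset_right
  · intro i j hij
    rw [onFun, disjoint_iff_inter_eq_empty,
      ← hinj.image_inter inter_subset_left inter_subset_left, image_eq_empty]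
    exact disjoint_iff_inter_eq_empty.mp
      ((hdA hij).mono inter_subset_right inter_subset_right)
  · exact fun i ↦ ((hf i).mono inter_subset_right).image_eq.symm

/-- If `A ∼_G B` then there is a bijection `g : A → B` such that `C ∼_G g(C)` for every
`C ⊆ A`. -/
theorem exists_bijOn_of_equidecomposable {G X : Type*} [Group G] [MulAction G X]
    {A B : Set X} (h : Equidecomposable G A B) :
    ∃ g : X → X, Set.BijOn g A B ∧ ∀ C ⊆ A, Equidecomposable G C (g '' C) := by
  obtain ⟨n, As, Bs, g, rfl, rfl, hdA, hdB, hg⟩ := h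
  have hbij := bijOn_piecewiseSmul hdA hdB hg
  exact ⟨piecewiseSmul As g, hbij, fun C hC ↦
    .image_of_eqOn_smul hC hdA (eqOn_piecewiseSmul hdA) (hbij.injOn.mono hC)⟩
end

section
/- Banach–Schröder–Bernstein theorem: suppose G acts on X and A, B ⊆ X. If A is G-equidecomposable with a subset of B, and B is G-equidecomposable with a subset of A, then A is G-equidecomposable with B. -/
/-!
An equidecomposition of `A` with `B` is the same thing as a bijection `A → B` that moves each
point by one of finitely many group elements. Schröder–Bernstein glues such a bijection out of
the injection `A → B` and the inverse of the injection `B → A`, so each point of `A` is still moved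
by an element of `S ∪ T⁻¹`, where `S` and `T` are the elements used by the two given
equidecompositions.
-/

open Pointwise

open Function Set

theorem Pairwise.eq_of_mem_of_mem {ι α : Type*} {s : ι → Set α}
    (hs : Pairwise (Disjoint on s)) {i j : ι} {x : α} (hi : x ∈ s i) (hj : x ∈ s j) : i = j :=
  by_contra fun hne ↦ disjoint_left.mp (hs hne) hi hj

section

variable {G X : Type*} [Group G] [MulAction G X] {A B : Set X}

theorem Equidecomposable.exists_bijective (h : Equidecomposable G A B) :
    ∃ (e : A → B) (S : Finset G), Bijective e ∧ ∀ a, ∃ g ∈ S, (e a : X) = g • (a : X) := by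
  classical
  obtain ⟨n, As, Bs, g, rfl, rfl, hAs, hBs, hg⟩ := h
  choose c hc using fun a : ⋃ i, As i ↦ mem_iUnion.mp a.2
  have hcB : ∀ a, g (c a) • (a : X) ∈ Bs (c a) := fun a ↦ hg (c a) ▸ smul_mem_smul_set (hc a)
  refine ⟨fun a ↦ ⟨_, mem_iUnion_of_mem _ (hcB a)⟩, Finset.univ.image g, ⟨?_, ?_⟩,
    fun a ↦ ⟨g (c a), Finset.mem_image_of_mem g (Finset.mem_univ _), rfl⟩⟩
  · intro a a' haa'
    have hx : g (c a) • (a : X) = g (c a') • (a' : X) := congrArg Subtype.val haa'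
    have hca : c a = c a' := hBs.eq_of_mem_of_mem (hcB a) (hx ▸ hcB a')
    exact Subtype.ext (smul_left_cancel _ (hca ▸ hx))
  · rintro ⟨b, hb⟩
    obtain ⟨j, hj⟩ := mem_iUnion.mp hb
    obtain ⟨x, hx, rfl⟩ := hg j ▸ hj
    have hcj : c ⟨x, mem_iUnion_of_mem j hx⟩ = j := hAs.eq_of_mem_of_mem (hc _) hx
    exact ⟨⟨x, mem_iUnion_of_mem j hx⟩, Subtype.ext (by simp only [hcj])⟩

theorem equidecomposable_of_bijective (e : A → B) (S : Finset G) (he : Bijective e)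
    (hS : ∀ a, ∃ g ∈ S, (e a : X) = g • (a : X)) : Equidecomposable G A B := by
  choose c hcS hc using hS
  let σ := Fintype.equivFin S
  -- the pieces are the fibres of `label`, a choice of which element of `S` moves each point
  let label : A → Fin (Fintype.card S) := fun a ↦ σ ⟨c a, hcS a⟩
  have hlabel : ∀ a, (e a : X) = (σ.symm (label a) : G) • (a : X) := by simp [label, hc]
  refine ⟨_, fun i ↦ (↑) '' (label ⁻¹' {i}), fun i ↦ (↑) '' (e '' (label ⁻¹' {i})),
    fun i ↦ σ.symm i, ?_, ?_, ?_, ?_, ?_⟩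
  · rw [← image_iUnion, ← preimage_iUnion, iUnion_of_singleton, preimage_univ,
      Subtype.coe_image_univ]
  · rw [← image_iUnion, ← image_iUnion, ← preimage_iUnion, iUnion_of_singleton, preimage_univ,
      image_univ, he.surjective.range_eq, Subtype.coe_image_univ]
  · intro i j hij
    rw [onFun, disjoint_image_iff Subtype.val_injective]
    exact (disjoint_singleton.mpr hij).preimage label
  · intro i j hij
    rw [onFun, disjoint_image_iff Subtype.val_injective, disjoint_image_iff he.injective]
    exact (disjoint_singleton.mpr hij).preimage label
  · intro i
    ext x
    simp only [mem_smul_set, mem_image, mem_preimage, mem_singleton_iff]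
    constructor
    · rintro ⟨_, ⟨a, rfl, rfl⟩, rfl⟩
      exact ⟨e a, ⟨a, rfl, rfl⟩, by rw [hlabel]⟩
    · rintro ⟨_, ⟨a, rfl, rfl⟩, rfl⟩
      exact ⟨a, ⟨a, rfl, rfl⟩, (hlabel a).symm⟩

end

/-- Banach–Schröder–Bernstein: if `A` is `G`-equidecomposable with a subset of `B` and
`B` is `G`-equidecomposable with a subset of `A`, then `A ∼_G B`. -/
theorem banach_schroeder_bernstein {G X : Type*} [Group G] [MulAction G X]
    {A B : Set X} (h1 : ∃ B₁ ⊆ B, Equidecomposable G A B₁)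
    (h2 : ∃ A₁ ⊆ A, Equidecomposable G B A₁) :
    Equidecomposable G A B := by
  classical
  obtain ⟨B₁, hB₁, hAB₁⟩ := h1
  obtain ⟨A₁, hA₁, hBA₁⟩ := h2
  obtain ⟨f, S, hf, hfS⟩ := hAB₁.exists_bijective
  obtain ⟨g, T, hg, hgT⟩ := hBA₁.exists_bijective
  obtain ⟨e, he, heST⟩ := Embedding.schroeder_bernstein_of_rel
    ((inclusion_injective hB₁).comp hf.injective) ((inclusion_injective hA₁).comp hg.injective)
    (fun a b ↦ ∃ s ∈ S ∪ T⁻¹, (b : X) = s • (a : X))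
    (fun a ↦ (hfS a).imp fun s ⟨hs, hsa⟩ ↦ ⟨Finset.mem_union_left _ hs, hsa⟩)
    (fun b ↦ (hgT b).imp' (·⁻¹) fun t ⟨ht, htb⟩ ↦
      ⟨Finset.mem_union_right _ (Finset.inv_mem_inv ht), by simp [htb]⟩)
  exact equidecomposable_of_bijective e _ he heST
end

section
/- Let σ be the rotation of ℝ³ about the z-axis with matrix (1/5)[[3,−4,0],[4,3,0],[0,0,5]] and τ the rotation about the x-axis with matrix (1/5)[[5,0,0],[0,3,−4],[0,4,3]]. Then σ and τ are independent: no nontrivial reduced word in σ, σ⁻¹, τ, τ⁻¹ equals the identity. Hence σ and τ generate a free subgroup of SO(3) of rank 2. -/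
open Pointwise

/-- Rotation about the z-axis by `arccos (3/5)`. -/
noncomputable def sigmaRot : Matrix (Fin 3) (Fin 3) ℝ :=
  !![3/5, -4/5, 0; 4/5, 3/5, 0; 0, 0, 1]

/-- The inverse (transpose) of `sigmaRot`. -/
noncomputable def sigmaRotInv : Matrix (Fin 3) (Fin 3) ℝ :=
  !![3/5, 4/5, 0; -4/5, 3/5, 0; 0, 0, 1]

/-- Rotation about the x-axis by `arccos (3/5)`. -/
noncomputable def tauRot : Matrix (Fin 3) (Fin 3) ℝ :=
  !![1, 0, 0; 0, 3/5, -4/5; 0, 4/5, 3/5]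

/-- The inverse (transpose) of `tauRot`. -/
noncomputable def tauRotInv : Matrix (Fin 3) (Fin 3) ℝ :=
  !![1, 0, 0; 0, 3/5, 4/5; 0, -4/5, 3/5]

/-- Evaluation of an element of the free group on two generators (`true ↦ σ`,
`false ↦ τ`) as a product of rotation matrices, reading its reduced word. -/
noncomputable def wordProd (w : FreeGroup Bool) : Matrix (Fin 3) (Fin 3) ℝ :=
  (w.toWord.map (fun p =>
    if p.1 then (if p.2 then sigmaRot else sigmaRotInv)
    else (if p.2 then tauRot else tauRotInv))).prod

/-!
Reduced modulo 5, the integer matrices `5σ^{±1}` and `5τ^{±1}` have rank one: each is `u vᵀ`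
over `ZMod 5`, and `vᵀ u' ≠ 0` whenever the two letters can be adjacent in a reduced word. So
for a nonempty reduced word of length `n` the integer matrix `5ⁿ w` is nonzero mod 5, whereas
`5ⁿ • 1` vanishes mod 5.
-/

open Matrix

namespace Matrix

variable {ι n R : Type*} [Fintype n] [DecidableEq n] [CommRing R] [IsDomain R]

theorem exists_prod_map_vecMulVec_eq (u v : ι → n → R) (hv : ∀ i, v i ≠ 0) :
    ∀ (i : ι) (L : List ι), (i :: L).IsChain (fun a b => v a ⬝ᵥ u b ≠ 0) →
      ∃ x ≠ 0, ((i :: L).map fun j => vecMulVec (u j) (v j)).prod = vecMulVec (u i) x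
  | i, [], _ => ⟨v i, hv i, by simp⟩
  | i, j :: L, hchain => by
    rw [List.isChain_cons_cons] at hchain
    obtain ⟨x, hx, hprod⟩ := exists_prod_map_vecMulVec_eq u v hv j L hchain.2
    refine ⟨(v i ⬝ᵥ u j) • x, smul_ne_zero hchain.1 hx, ?_⟩
    rw [List.map_cons, List.prod_cons, hprod, vecMulVec_mul_vecMulVec]

theorem prod_map_vecMulVec_ne_zero (u v : ι → n → R) (hu : ∀ i, u i ≠ 0)
    (hv : ∀ i, v i ≠ 0) {L : List ι} (hL : L ≠ [])
    (hchain : L.IsChain (fun a b => v a ⬝ᵥ u b ≠ 0)) :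
    (L.map fun j => vecMulVec (u j) (v j)).prod ≠ 0 := by
  obtain ⟨i, L, rfl⟩ := List.exists_cons_of_ne_nil hL
  obtain ⟨x, hx, hprod⟩ := exists_prod_map_vecMulVec_eq u v hv i L hchain
  rw [hprod]
  exact vecMulVec_ne_zero (hu i) hx

end Matrix

theorem sigmaRot_transpose : sigmaRotᵀ = sigmaRotInv := by
  ext i j; fin_cases i <;> fin_cases j <;> simp [sigmaRot, sigmaRotInv]

theorem tauRot_transpose : tauRotᵀ = tauRotInv := by
  ext i j; fin_cases i <;> fin_cases j <;> simp [tauRot, tauRotInv]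

theorem sigmaRot_mem_specialOrthogonalGroup : sigmaRot ∈ specialOrthogonalGroup (Fin 3) ℝ := by
  refine mem_specialOrthogonalGroup_iff.mpr ⟨(mem_orthogonalGroup_iff _ _).mpr ?_, ?_⟩
  · rw [sigmaRot_transpose, sigmaRot, sigmaRotInv, mul_fin_three, one_fin_three]; norm_num
  · rw [det_fin_three]; simp [sigmaRot]; norm_num

theorem tauRot_mem_specialOrthogonalGroup : tauRot ∈ specialOrthogonalGroup (Fin 3) ℝ := by
  refine mem_specialOrthogonalGroup_iff.mpr ⟨(mem_orthogonalGroup_iff _ _).mpr ?_, ?_⟩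
  · rw [tauRot_transpose, tauRot, tauRotInv, mul_fin_three, one_fin_three]; norm_num
  · rw [det_fin_three]; simp [tauRot]; norm_num

instance : Fact (Nat.Prime 5) := ⟨Nat.prime_five⟩

noncomputable def letterRot (p : Bool × Bool) : Matrix (Fin 3) (Fin 3) ℝ :=
  if p.1 then (if p.2 then sigmaRot else sigmaRotInv) else (if p.2 then tauRot else tauRotInv)

theorem wordProd_eq_prod_map_letterRot (w : FreeGroup Bool) :
    wordProd w = (w.toWord.map letterRot).prod := rfl

def letterInt (p : Bool × Bool) : Matrix (Fin 3) (Fin 3) ℤ :=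
  if p.1 then (if p.2 then !![3, -4, 0; 4, 3, 0; 0, 0, 5] else !![3, 4, 0; -4, 3, 0; 0, 0, 5])
  else (if p.2 then !![5, 0, 0; 0, 3, -4; 0, 4, 3] else !![5, 0, 0; 0, 3, 4; 0, -4, 3])

def letterCol (p : Bool × Bool) : Fin 3 → ZMod 5 :=
  if p.1 then (if p.2 then ![3, 4, 0] else ![1, 2, 0]) else (if p.2 then ![0, 3, 4] else ![0, 1, 2])

def letterRow (p : Bool × Bool) : Fin 3 → ZMod 5 :=
  if p.1 then (if p.2 then ![1, 2, 0] else ![3, 4, 0]) else (if p.2 then ![0, 1, 2] else ![0, 3, 4])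

theorem letterInt_map_intCast (p : Bool × Bool) :
    (letterInt p).map (Int.cast : ℤ → ℝ) = (5 : ℝ) • letterRot p := by
  rcases p with ⟨_ | _, _ | _⟩ <;>
    simp [letterInt, letterRot, sigmaRot, sigmaRotInv, tauRot, tauRotInv, ← Matrix.ext_iff,
      Fin.forall_fin_succ] <;> norm_num

theorem letterInt_map_intCast_zmod (p : Bool × Bool) :
    (letterInt p).map (Int.cast : ℤ → ZMod 5) = vecMulVec (letterCol p) (letterRow p) := by
  revert p; decide

theorem letterCol_ne_zero (p : Bool × Bool) : letterCol p ≠ 0 := by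
  revert p; decide

theorem letterRow_ne_zero (p : Bool × Bool) : letterRow p ≠ 0 := by
  revert p; decide

theorem letterRow_dotProduct_letterCol_ne_zero {p q : Bool × Bool} (h : p.1 = q.1 → p.2 = q.2) :
    letterRow p ⬝ᵥ letterCol q ≠ 0 := by
  revert p q; decide

theorem prod_map_letterInt_map_intCast (L : List (Bool × Bool)) :
    (L.map letterInt).prod.map (Int.cast : ℤ → ℝ) =
      (5 : ℝ) ^ L.length • (L.map letterRot).prod := by
  change (Int.castRingHom ℝ).mapMatrix (L.map letterInt).prod = _
  rw [map_list_prod, List.map_map, ← List.length_map (f := letterRot), List.smul_prod,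
    List.map_map]
  exact congrArg List.prod (List.map_congr_left fun p _ => letterInt_map_intCast p)

theorem prod_map_letterInt_map_intCast_zmod_ne_zero {L : List (Bool × Bool)} (hL : L ≠ [])
    (hred : FreeGroup.IsReduced L) :
    (L.map letterInt).prod.map (Int.cast : ℤ → ZMod 5) ≠ 0 := by
  change (Int.castRingHom (ZMod 5)).mapMatrix (L.map letterInt).prod ≠ 0
  rw [map_list_prod, List.map_map, show (Int.castRingHom (ZMod 5)).mapMatrix ∘ letterInt =
    fun p => vecMulVec (letterCol p) (letterRow p) from funext letterInt_map_intCast_zmod]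
  exact prod_map_vecMulVec_ne_zero _ _ letterCol_ne_zero letterRow_ne_zero hL
    (hred.imp fun _ _ => letterRow_dotProduct_letterCol_ne_zero)

theorem wordProd_ne_one {w : FreeGroup Bool} (hw : w ≠ 1) : wordProd w ≠ 1 := by
  intro h
  have hL : w.toWord ≠ [] := by simpa using hw
  have hn : w.toWord.length ≠ 0 := by simpa using hL
  have hprod : (w.toWord.map letterInt).prod = (5 : ℤ) ^ w.toWord.length • 1 := by
    refine map_injective (f := (Int.cast : ℤ → ℝ)) Int.cast_injective ?_
    dsimp only
    rw [prod_map_letterInt_map_intCast, ← wordProd_eq_prod_map_letterRot, h,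
      map_smul' _ _ _ fun _ _ => Int.cast_mul .., Matrix.map_one _ Int.cast_zero Int.cast_one,
      Int.cast_pow, Int.cast_ofNat]
  apply prod_map_letterInt_map_intCast_zmod_ne_zero hL FreeGroup.isReduced_toWord
  rw [hprod, map_smul' _ _ _ fun _ _ => Int.cast_mul .., Int.cast_pow,
    show ((5 : ℤ) : ZMod 5) = 0 from rfl, zero_pow hn, zero_smul]

noncomputable def rotationsHom : FreeGroup Bool →* specialOrthogonalGroup (Fin 3) ℝ :=
  FreeGroup.lift fun b => if b then ⟨sigmaRot, sigmaRot_mem_specialOrthogonalGroup⟩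
    else ⟨tauRot, tauRot_mem_specialOrthogonalGroup⟩

theorem coe_rotationsHom (w : FreeGroup Bool) :
    (rotationsHom w : Matrix (Fin 3) (Fin 3) ℝ) = wordProd w := by
  conv_lhs => rw [← FreeGroup.mk_toWord (x := w)]
  rw [rotationsHom, FreeGroup.lift_mk, ← Submonoid.coe_subtype, map_list_prod, List.map_map,
    wordProd_eq_prod_map_letterRot]
  refine congrArg List.prod (List.map_congr_left ?_)
  rintro ⟨_ | _, _ | _⟩ _ <;>
    simp [letterRot, ← star_eq_inv, star_eq_conjTranspose, sigmaRot_transpose, tauRot_transpose]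

theorem rotationsHom_injective : Function.Injective rotationsHom := by
  refine (injective_iff_map_eq_one _).mpr fun w hw => ?_
  by_contra hne
  exact wordProd_ne_one hne (by rw [← coe_rotationsHom, hw]; rfl)

/-- The rotations `σ` and `τ` lie in `SO(3)` and are independent: no nontrivial reduced
word in `σ, σ⁻¹, τ, τ⁻¹` is the identity; equivalently the evaluation map on the free
group of rank 2 is injective, so `σ` and `τ` generate a free subgroup of `SO(3)` of
rank 2. -/
theorem sigma_tau_independent :
    sigmaRot ∈ Matrix.specialOrthogonalGroup (Fin 3) ℝ ∧
    tauRot ∈ Matrix.specialOrthogonalGroup (Fin 3) ℝ ∧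
    (∀ w : FreeGroup Bool, w ≠ 1 → wordProd w ≠ 1) ∧
    Function.Injective wordProd := by
  refine ⟨sigmaRot_mem_specialOrthogonalGroup, tauRot_mem_specialOrthogonalGroup,
    fun w hw => wordProd_ne_one hw, ?_⟩
  rw [show wordProd = Subtype.val ∘ rotationsHom from funext fun w => (coe_rotationsHom w).symm]
  exact Subtype.val_injective.comp rotationsHom_injective
end
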